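/- Let ρ : ℝ³ → ℝ be a Schwartz function such that 1 + ρ(x) ≥ c for some constant c > 0 and all x ∈ ℝ³, and let b, v, w : ℝ³ → ℝ³ be Schwartz vector fields with div b = 0. Then ∫_{ℝ³} (1/(1+ρ)) (b·∇v)·w dx + ∫_{ℝ³} (1/(1+ρ)) (b·∇w)·v dx = −∫_{ℝ³} div( b/(1+ρ) ) (v·w) dx. (The cancellation identity of Section 2/Lemma 3.3 that compensates for the lack of vertical dissipation in the magnetic-field estimates.) -/

import Mathlib

/-!
By the Leibniz rule both integrands on the left combine into `∑ⱼ (bⱼ / (1 + ρ)) ∂ⱼ (v · w)`,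
where `v · w` is again a Schwartz function. Since `1 + ρ ≥ c > 0`, each `bⱼ / (1 + ρ)` is
differentiable, bounded and has bounded derivatives, so integrating by parts against `v · w` in
each coordinate direction moves `∂ⱼ` onto `bⱼ / (1 + ρ)`.
-/

open MeasureTheory SchwartzMap LineDeriv

noncomputable section

/-- Partial derivative of a Schwartz function on `ℝ³` in the `j`-th coordinate direction. -/
def pd3 (j : Fin 3) (f : SchwartzMap (EuclideanSpace ℝ (Fin 3)) ℝ) :
    SchwartzMap (EuclideanSpace ℝ (Fin 3)) ℝ :=
  LineDeriv.lineDerivOpCLM ℝ (SchwartzMap (EuclideanSpace ℝ (Fin 3)) ℝ) (EuclideanSpace.single j (1 : ℝ)) f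

theorem pd3_eq_lineDerivOp (j : Fin 3) (f : 𝓢(EuclideanSpace ℝ (Fin 3), ℝ)) :
    pd3 j f = ∂_{EuclideanSpace.single j (1 : ℝ)} f :=
  rfl

namespace SchwartzMap

variable {E : Type*} [NormedAddCommGroup E] [NormedSpace ℝ E]

def pointwiseDot {ι : Type*} [Fintype ι] (f g : ι → 𝓢(E, ℝ)) : 𝓢(E, ℝ) :=
  ∑ i, pairing (ContinuousLinearMap.mul ℝ ℝ) (f i) (g i)

theorem pointwiseDot_apply {ι : Type*} [Fintype ι] (f g : ι → 𝓢(E, ℝ)) (x : E) :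
    pointwiseDot f g x = ∑ i, f i x * g i x := by
  simp [pointwiseDot, sum_apply]

theorem pointwiseDot_comm {ι : Type*} [Fintype ι] (f g : ι → 𝓢(E, ℝ)) :
    pointwiseDot f g = pointwiseDot g f := by
  ext x
  simp only [pointwiseDot_apply, mul_comm]

theorem lineDerivOp_pairing_mul (f g : 𝓢(E, ℝ)) (m : E) :
    ∂_{m} (pairing (ContinuousLinearMap.mul ℝ ℝ) f g) =
      pairing (ContinuousLinearMap.mul ℝ ℝ) (∂_{m} f) g +
        pairing (ContinuousLinearMap.mul ℝ ℝ) f (∂_{m} g) := by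
  ext x
  simp only [lineDerivOp_apply_eq_fderiv, add_apply, pairing_apply_apply,
    ContinuousLinearMap.mul_apply']
  rw [show ⇑(pairing (ContinuousLinearMap.mul ℝ ℝ) f g) = fun y => f y * g y from rfl,
    fderiv_fun_mul f.differentiableAt g.differentiableAt]
  simp only [add_apply, smul_apply, smul_eq_mul]
  ring

theorem lineDerivOp_pointwiseDot {ι : Type*} [Fintype ι] (f g : ι → 𝓢(E, ℝ)) (m : E) :
    ∂_{m} (pointwiseDot f g) =
      pointwiseDot (fun i => ∂_{m} (f i)) g + pointwiseDot f (fun i => ∂_{m} (g i)) := by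
  simp only [pointwiseDot, lineDerivOp_sum, lineDerivOp_pairing_mul, Finset.sum_add_distrib]

section Weight

variable {ρ : 𝓢(E, ℝ)} {c : ℝ}

theorem norm_div_one_add_le (hc : 0 < c) (hρ : ∀ x, c ≤ 1 + ρ x) (β : 𝓢(E, ℝ)) (x : E) :
    ‖β x / (1 + ρ x)‖ ≤ SchwartzMap.seminorm ℝ 0 0 β / c := by
  have hpos : 0 < 1 + ρ x := hc.trans_le (hρ x)
  rw [norm_div, Real.norm_of_nonneg hpos.le]
  exact div_le_div₀ (by positivity) (norm_le_seminorm ℝ β x) hc (hρ x)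

theorem hasFDerivAt_div_one_add (hc : 0 < c) (hρ : ∀ x, c ≤ 1 + ρ x) (β : 𝓢(E, ℝ)) (x : E) :
    HasFDerivAt (fun y => β y / (1 + ρ y))
      (β x • (-((1 + ρ x) ^ 2)⁻¹ • fderiv ℝ ρ x) + (1 + ρ x)⁻¹ • fderiv ℝ β x) x := by
  have hne : 1 + ρ x ≠ 0 := (hc.trans_le (hρ x)).ne'
  simp only [div_eq_mul_inv]
  exact β.differentiableAt.hasFDerivAt.mul
    ((hasDerivAt_inv hne).comp_hasFDerivAt x (ρ.differentiableAt.hasFDerivAt.const_add 1))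

theorem fderiv_div_one_add_apply (hc : 0 < c) (hρ : ∀ x, c ≤ 1 + ρ x) (β : 𝓢(E, ℝ))
    (x v : E) : fderiv ℝ (fun y => β y / (1 + ρ y)) x v =
      ∂_{v} β x / (1 + ρ x) - β x * ∂_{v} ρ x / (1 + ρ x) ^ 2 := by
  rw [(hasFDerivAt_div_one_add hc hρ β x).fderiv]
  simp only [add_apply, smul_apply, smul_eq_mul, lineDerivOp_apply_eq_fderiv]
  ring

theorem norm_fderiv_div_one_add_le (hc : 0 < c) (hρ : ∀ x, c ≤ 1 + ρ x) (β : 𝓢(E, ℝ))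
    (x v : E) : ‖fderiv ℝ (fun y => β y / (1 + ρ y)) x v‖ ≤
      SchwartzMap.seminorm ℝ 0 0 (∂_{v} β) / c +
        SchwartzMap.seminorm ℝ 0 0 β * SchwartzMap.seminorm ℝ 0 0 (∂_{v} ρ) / c ^ 2 := by
  have hpos : 0 < 1 + ρ x := hc.trans_le (hρ x)
  rw [fderiv_div_one_add_apply hc hρ β x v]
  refine (norm_sub_le _ _).trans (add_le_add ?_ ?_)
  · rw [norm_div, Real.norm_of_nonneg hpos.le]
    exact div_le_div₀ (by positivity) (norm_le_seminorm ℝ _ x) hc (hρ x)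
  · rw [norm_div, norm_mul, norm_pow, Real.norm_of_nonneg hpos.le]
    exact div_le_div₀ (by positivity)
      (mul_le_mul (norm_le_seminorm ℝ β x) (norm_le_seminorm ℝ _ x) (norm_nonneg _)
        (by positivity)) (by positivity) (pow_le_pow_left₀ hc.le (hρ x) 2)

end Weight

variable [FiniteDimensional ℝ E] [MeasurableSpace E] [BorelSpace E] {μ : Measure E}
  [μ.IsAddHaarMeasure]

theorem integrable_bdd_mul {f : E → ℝ} {C : ℝ} (hf : AEStronglyMeasurable f μ)
    (hfC : ∀ x, ‖f x‖ ≤ C) (g : 𝓢(E, ℝ)) : Integrable (fun x => f x * g x) μ :=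
  g.integrable.bdd_mul hf (ae_of_all _ hfC)

theorem integral_bdd_mul_lineDerivOp {f : E → ℝ} {C C' : ℝ} (hf : Differentiable ℝ f)
    (hfC : ∀ x, ‖f x‖ ≤ C) (v : E) (hf'C : ∀ x, ‖fderiv ℝ f x v‖ ≤ C') (g : 𝓢(E, ℝ)) :
    ∫ x, f x * ∂_{v} g x ∂μ = -∫ x, fderiv ℝ f x v * g x ∂μ :=
  integral_mul_fderiv_eq_neg_fderiv_mul_of_integrable
    (integrable_bdd_mul (measurable_fderiv_apply_const ℝ f v).aestronglyMeasurable hf'C g)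
    (integrable_bdd_mul hf.continuous.aestronglyMeasurable hfC (∂_{v} g))
    (integrable_bdd_mul hf.continuous.aestronglyMeasurable hfC g)
    (fun x _ => hf x) (fun _ _ => g.differentiableAt)

variable {ρ : 𝓢(E, ℝ)} {c : ℝ}

theorem integrable_div_one_add_mul (hc : 0 < c) (hρ : ∀ x, c ≤ 1 + ρ x) (β g : 𝓢(E, ℝ)) :
    Integrable (fun x => β x / (1 + ρ x) * g x) μ :=
  integrable_bdd_mul
    (Differentiable.continuous fun x =>
      (hasFDerivAt_div_one_add hc hρ β x).differentiableAt).aestronglyMeasurable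
    (norm_div_one_add_le hc hρ β) g

theorem integrable_fderiv_div_one_add_mul (hc : 0 < c) (hρ : ∀ x, c ≤ 1 + ρ x)
    (β g : 𝓢(E, ℝ)) (v : E) :
    Integrable (fun x => fderiv ℝ (fun y => β y / (1 + ρ y)) x v * g x) μ :=
  integrable_bdd_mul (measurable_fderiv_apply_const ℝ _ v).aestronglyMeasurable
    (norm_fderiv_div_one_add_le hc hρ β · v) g

theorem integral_div_one_add_mul_lineDerivOp (hc : 0 < c) (hρ : ∀ x, c ≤ 1 + ρ x)
    (β g : 𝓢(E, ℝ)) (v : E) :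
    ∫ x, β x / (1 + ρ x) * ∂_{v} g x ∂μ =
      -∫ x, fderiv ℝ (fun y => β y / (1 + ρ y)) x v * g x ∂μ :=
  integral_bdd_mul_lineDerivOp (fun x => (hasFDerivAt_div_one_add hc hρ β x).differentiableAt)
    (norm_div_one_add_le hc hρ β) v (norm_fderiv_div_one_add_le hc hρ β · v) g

end SchwartzMap

theorem magnetic_cancellation_general
    (ρ : SchwartzMap (EuclideanSpace ℝ (Fin 3)) ℝ) (c : ℝ) (hc : 0 < c)
    (hρ : ∀ x, c ≤ 1 + ρ x)
    (b v w : Fin 3 → SchwartzMap (EuclideanSpace ℝ (Fin 3)) ℝ) :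
    (∫ x, (1/(1 + ρ x)) * ∑ i, (∑ j, b j x * pd3 j (v i) x) * w i x) +
      (∫ x, (1/(1 + ρ x)) * ∑ i, (∑ j, b j x * pd3 j (w i) x) * v i x) =
      -∫ x, (∑ j : Fin 3, fderiv ℝ (fun y => b j y / (1 + ρ y)) x (EuclideanSpace.single j 1)) *
        (∑ i, v i x * w i x) := by
  have hlhs : ∀ (f g : Fin 3 → 𝓢(EuclideanSpace ℝ (Fin 3), ℝ)) x,
      (1/(1 + ρ x)) * ∑ i, (∑ j, b j x * pd3 j (f i) x) * g i x =
        ∑ j, b j x / (1 + ρ x) * pointwiseDot (fun i => pd3 j (f i)) g x := by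
    intro f g x
    simp only [pointwiseDot_apply, Finset.mul_sum, Finset.sum_mul]
    rw [Finset.sum_comm]
    exact Finset.sum_congr rfl fun _ _ => Finset.sum_congr rfl fun _ _ => by ring
  have hrhs : ∀ x,
      (∑ j : Fin 3, fderiv ℝ (fun y => b j y / (1 + ρ y)) x (EuclideanSpace.single j 1)) *
        (∑ i, v i x * w i x) =
      ∑ j : Fin 3, fderiv ℝ (fun y => b j y / (1 + ρ y)) x (EuclideanSpace.single j 1) *
        pointwiseDot v w x := by
    intro x
    rw [pointwiseDot_apply, Finset.sum_mul]
  simp_rw [hlhs, hrhs]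
  rw [integral_finsetSum _ fun j _ => integrable_div_one_add_mul hc hρ (b j) _,
    integral_finsetSum _ fun j _ => integrable_div_one_add_mul hc hρ (b j) _,
    integral_finsetSum _ fun j _ => integrable_fderiv_div_one_add_mul hc hρ (b j) _ _,
    ← Finset.sum_add_distrib, ← Finset.sum_neg_distrib]
  refine Finset.sum_congr rfl fun j _ => ?_
  simp only [pd3_eq_lineDerivOp]
  rw [← integral_add (integrable_div_one_add_mul hc hρ (b j) _)
      (integrable_div_one_add_mul hc hρ (b j) _),
    ← integral_div_one_add_mul_lineDerivOp hc hρ (b j) (pointwiseDot v w),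
    lineDerivOp_pointwiseDot]
  simp only [← mul_add, add_apply, pointwiseDot_comm v]

/-- Cancellation identity compensating for the lack of vertical dissipation: for Schwartz
vector fields `b, v, w` (given componentwise) with `div b = 0` and a Schwartz `ρ` with
`1 + ρ ≥ c > 0`,
`∫ (1/(1+ρ)) (b·∇v)·w + ∫ (1/(1+ρ)) (b·∇w)·v = -∫ div(b/(1+ρ)) (v·w)`. -/
theorem magnetic_cancellation
    (ρ : SchwartzMap (EuclideanSpace ℝ (Fin 3)) ℝ) (c : ℝ) (hc : 0 < c)
    (hρ : ∀ x, c ≤ 1 + ρ x)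
    (b v w : Fin 3 → SchwartzMap (EuclideanSpace ℝ (Fin 3)) ℝ)
    (hdiv : ∀ x, ∑ j, pd3 j (b j) x = 0) :
    (∫ x, (1/(1 + ρ x)) * ∑ i, (∑ j, b j x * pd3 j (v i) x) * w i x) +
      (∫ x, (1/(1 + ρ x)) * ∑ i, (∑ j, b j x * pd3 j (w i) x) * v i x) =
      -∫ x, (∑ j : Fin 3, fderiv ℝ (fun y => b j y / (1 + ρ y)) x (EuclideanSpace.single j 1)) *
        (∑ i, v i x * w i x) :=
  magnetic_cancellation_general ρ c hc hρ b v w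

end
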